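/- For all integers m ≥ 1 and k ≥ 1, Σ_{j=0}^{m} C(m,j) (q−1)^j E_{j,q}^{(0,k+1)} = (1+q)^{k+1} / ∏_{i=0}^{k} (1 + q^{m−i}). -/

import Mathlib

open Finset

/-- The q-number `[x]_q = (1 - q^x)/(1 - q)`, with `q^x = exp (x * log q)` (rpow). -/
noncomputable def qNum (q x : ℝ) : ℝ := (1 - q ^ x) / (1 - q)

/-- `[l]_{-q} = (1 - (-q)^l)/(1 + q)` for a natural number `l`. -/
noncomputable def qNumNeg (q : ℝ) (l : ℕ) : ℝ := (1 - (-q) ^ l) / (1 + q)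

/-- The higher-order q-Euler polynomial
`E_{m,q}^{(h,k)}(x) = ((1+q)^k/(1-q)^m) * Σ_{j=0}^m C(m,j) (-1)^j q^{jx} / Π_{i=0}^{k-1} (1 + q^{h+j-i})`. -/
noncomputable def qE (q : ℝ) (h : ℤ) (k m : ℕ) (x : ℝ) : ℝ :=
  ((1 + q) ^ k / (1 - q) ^ m) *
    ∑ j ∈ Finset.range (m + 1),
      (m.choose j : ℝ) * (-1) ^ j * q ^ ((j : ℝ) * x) /
        ∏ i ∈ Finset.range k, (1 + q ^ ((h : ℝ) + (j : ℝ) - (i : ℝ)))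

/-!
Evaluated at `x = 0`, the definition says that `(q - 1)^j E_{j,q}^{(h,k)}` is the alternating
binomial transform `Σ_l C(j,l) (-1)^(j+l) a_l` of `a_l = (1+q)^k / ∏_{i<k} (1 + q^(h+l-i))`.
The left-hand side is therefore the binomial transform of that transform, and binomial inversion
returns `a_m`, which is the right-hand side for `h = 0`.
-/

theorem sum_range_choose_mul_choose_mul_neg_one_pow {R : Type*} [CommRing R] (m l : ℕ) :
    ∑ j ∈ range (m + 1), (m.choose j * j.choose l * (-1) ^ (j + l) : R)
      = if l = m then 1 else 0 := by
  rcases lt_or_ge m l with hml | hlm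
  · rw [if_neg hml.ne']
    refine sum_eq_zero fun j hj => ?_
    rw [Nat.choose_eq_zero_of_lt (n := j) (k := l) (by rw [mem_range] at hj; omega)]
    simp
  obtain ⟨n, rfl⟩ := Nat.exists_eq_add_of_le hlm
  have below : ∀ j ∈ range l, (((l + n).choose j * j.choose l * (-1) ^ (j + l)) : R) = 0 :=
    fun j hj => by rw [Nat.choose_eq_zero_of_lt (mem_range.mp hj)]; simp
  have above : ∀ t ∈ range (n + 1),
      (((l + n).choose (l + t) * (l + t).choose l * (-1) ^ (l + t + l)) : R)
        = (l + n).choose l * ((-1) ^ t * n.choose t) := fun t _ => by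
    have hc := Nat.choose_mul (n := l + n) (k := l + t) (s := l) (Nat.le_add_right l t)
    simp only [Nat.add_sub_cancel_left] at hc
    rw [← Nat.cast_mul, hc, show l + t + l = t + 2 * l by ring, pow_add, pow_mul]
    push_cast
    ring
  have alternating : ∑ t ∈ range (n + 1), ((-1) ^ t * n.choose t : R) = if n = 0 then 1 else 0 := by
    exact_mod_cast congrArg (Int.cast : ℤ → R) Int.alternating_sum_range_choose
  rw [show l + n + 1 = l + (n + 1) by ring, sum_range_add, sum_eq_zero below, zero_add,
    sum_congr rfl above, ← mul_sum, alternating]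
  rcases eq_or_ne n 0 with rfl | hn <;> simp [*]

theorem sum_choose_mul_sum_choose_neg_one_pow {R : Type*} [CommRing R] (f : ℕ → R) (m : ℕ) :
    ∑ j ∈ range (m + 1), m.choose j * ∑ l ∈ range (j + 1), (-1) ^ (j + l) * j.choose l * f l
      = f m := by
  have extend : ∀ j ∈ range (m + 1),
      ∑ l ∈ range (j + 1), ((-1) ^ (j + l) * j.choose l * f l : R)
        = ∑ l ∈ range (m + 1), (-1) ^ (j + l) * j.choose l * f l := fun j hj => by
    refine sum_subset (range_subset_range.mpr (by simpa using hj)) fun l _ hl => ?_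
    rw [Nat.choose_eq_zero_of_lt (by simpa using hl)]
    simp
  rw [sum_congr rfl fun j hj => by rw [extend j hj]]
  simp_rw [mul_sum]
  rw [sum_comm]
  have collect : ∀ l ∈ range (m + 1),
      ∑ j ∈ range (m + 1), (m.choose j * ((-1) ^ (j + l) * j.choose l * f l) : R)
        = (if l = m then 1 else 0) * f l := fun l _ => by
    rw [← sum_range_choose_mul_choose_mul_neg_one_pow, sum_mul]
    exact sum_congr rfl fun j _ => by ring
  simp [sum_congr rfl collect]

theorem sub_one_pow_mul_qE_zero (q : ℝ) (hq1 : q ≠ 1) (h : ℤ) (k j : ℕ) :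
    (q - 1) ^ j * qE q h k j 0
      = ∑ l ∈ range (j + 1), (-1) ^ (j + l) * j.choose l *
          ((1 + q) ^ k / ∏ i ∈ range k, (1 + q ^ ((h : ℝ) + l - i))) := by
  have hpow : (1 - q) ^ j ≠ 0 := pow_ne_zero _ (sub_ne_zero.mpr hq1.symm)
  rw [qE, show q - 1 = -1 * (1 - q) by ring, mul_pow, mul_sum, mul_sum]
  refine sum_congr rfl fun l _ => ?_
  rw [mul_zero, Real.rpow_zero, pow_add]
  field_simp

theorem stmt_0 (q : ℝ) (hq1 : q ≠ 1) (m k : ℕ) :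
    ∑ j ∈ Finset.range (m + 1), (m.choose j : ℝ) * (q - 1) ^ j * qE q 0 (k + 1) j 0
      = (1 + q) ^ (k + 1) /
          ∏ i ∈ Finset.range (k + 1), (1 + q ^ ((m : ℝ) - (i : ℝ))) := by
  simp_rw [mul_assoc, sub_one_pow_mul_qE_zero q hq1]
  rw [sum_choose_mul_sum_choose_neg_one_pow
    (fun l => (1 + q) ^ (k + 1) / ∏ i ∈ range (k + 1), (1 + q ^ (((0 : ℤ) : ℝ) + l - i)))]
  simp
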